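/- arXiv:0706.0633 — 3 statements merged into one kernel-verified Lean document; each statement's English description precedes it below -/
import Mathlib

section
/- Let X be a nonreflexive Banach space. Then there exists a nonempty bounded convex set C ⊆ X ⊕∞ ℝ such that the distance function φ(x) := dist((x,0), C) satisfies: φ(x) > 0 for every x ∈ X, and for every ε > 0 there is a set M_ε ⊆ X with diam M_ε < ε and inf φ(M_ε) = 0. -/
/-!
Fix `Φ ∈ X** \ X` at distance `2θ > 0` from `X` (positive because `X` is complete). Helly's
theorem, applied alternately in `X*` and in `X`, produces `fₖ ∈ X*` and `xₙ ∈ X` with `‖fₖ‖ ≤ 1`,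
`‖xₙ‖ ≤ R` and `fₖ xₙ = θ` for `k ≤ n`, `fₖ xₙ = 0` for `n < k`.

Let `C` be the convex hull of the points `((1 - 1/(a+1)) xₐ + 1/(a+1) x_b, 1/(b+1))`. For fixed `a`
their first coordinates lie within `2R/(a+1)` of each other while their distances to `X` tend to
`0`; these first coordinates form the sets `M_ε`. If `(z, 0)` were in the closure of `C`, then
`fₖ z → 0` (true on every generator, and the `fₖ` are equicontinuous), whereas every generator
satisfies the linear inequality `θ ≤ 2 fₖ + k f_K + θ K t` for `k ≥ 2`; letting first `K → ∞`
and then `k → ∞` gives `θ ≤ 0`.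
-/

/-- A Banach space is reflexive if the canonical embedding into its double dual is
surjective. -/
def ReflexiveSpace (X : Type*) [NormedAddCommGroup X] [NormedSpace ℝ X] : Prop :=
  Function.Surjective (NormedSpace.inclusionInDoubleDual ℝ X)

open Metric Set Filter Topology Pointwise

section Helly

variable {E : Type*} [NormedAddCommGroup E] [NormedSpace ℝ E] {ι : Type*} [Fintype ι]

lemma exists_forall_apply_eq_of_abs_sum_le (φ : ι → StrongDual ℝ E) (c : ι → ℝ) {M : ℝ}
    (H : ∀ a : ι → ℝ, |∑ i, a i * c i| ≤ M * ‖∑ i, a i • φ i‖) :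
    ∃ x : E, ∀ i, φ i x = c i := by
  let T : E →ₗ[ℝ] ι → ℝ := LinearMap.pi fun i => (φ i : E →ₗ[ℝ] ℝ)
  suffices c ∈ LinearMap.range T by
    obtain ⟨x, hx⟩ := this
    exact ⟨x, fun i => congrFun hx i⟩
  refine (Subspace.forall_mem_dualAnnihilator_apply_eq_zero_iff _ c).1 fun ℓ hℓ => ?_
  classical
  set a : ι → ℝ := fun i => ℓ fun j => if i = j then 1 else 0
  have hℓ_apply : ∀ v, ℓ v = ∑ i, a i * v i := fun v => by
    rw [LinearMap.pi_apply_eq_sum_univ]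
    exact Finset.sum_congr rfl fun i _ => by rw [smul_eq_mul, mul_comm]
  have hsum : ∑ i, a i • φ i = 0 := by
    ext y
    have : ℓ (T y) = 0 := (Submodule.mem_dualAnnihilator _).1 hℓ _ ⟨y, rfl⟩
    simpa [hℓ_apply, T] using this
  have := H a
  rw [hsum, norm_zero, mul_zero, abs_nonpos_iff] at this
  rw [hℓ_apply, ← this]

lemma eq_zero_of_forall_add_mul_neg {α β : ℝ} (h : ∀ t : ℝ, α + t * β < 0) : β = 0 := by
  by_contra hβ
  have := h ((1 - α) / β)
  rw [div_mul_cancel₀ _ hβ] at this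
  linarith

/-- Helly's theorem. -/
theorem exists_norm_le_forall_apply_eq_of_abs_sum_le (φ : ι → StrongDual ℝ E) (c : ι → ℝ)
    {M ε : ℝ} (hM : 0 ≤ M) (hε : 0 < ε)
    (H : ∀ a : ι → ℝ, |∑ i, a i * c i| ≤ M * ‖∑ i, a i • φ i‖) :
    ∃ x : E, ‖x‖ ≤ M + ε ∧ ∀ i, φ i x = c i := by
  obtain ⟨x₀, hx₀⟩ := exists_forall_apply_eq_of_abs_sum_le φ c H
  by_contra! hfar
  let K : Submodule ℝ E := ⨅ i, LinearMap.ker (φ i : E →ₗ[ℝ] ℝ)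
  have hK : ∀ k, k ∈ K ↔ ∀ i, φ i k = 0 := fun k => by simp [K, Submodule.mem_iInf]
  set U : Set E := ({x₀} : Set E) + (K : Set E) + ball 0 (M + ε)
  have hU : ∀ k ∈ K, ∀ b ∈ ball (0 : E) (M + ε), x₀ + k + b ∈ U := fun k hk b hb =>
    ⟨_, ⟨x₀, rfl, k, hk, rfl⟩, b, hb, rfl⟩
  have h0U : (0 : E) ∉ U := by
    rintro ⟨_, ⟨y, hy, k, hk, rfl⟩, b, hb, hsum⟩
    rw [mem_singleton_iff.1 hy] at hsum
    simp only at hsum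
    obtain ⟨i, hi⟩ := hfar (x₀ + k) (by
      rw [eq_neg_of_add_eq_zero_left hsum, norm_neg]
      exact (mem_ball_zero_iff.1 hb).le)
    exact hi (by rw [map_add, hx₀, (hK k).1 hk, add_zero])
  -- A functional separating `0` from `U` kills `K`, so it lies in the span of the `φ i`;
  -- testing it on `x₀ ± b` then contradicts `H`.
  obtain ⟨g, hg⟩ := geometric_hahn_banach_open_point
    (((convex_singleton x₀).add K.convex).add (convex_ball 0 _)) isOpen_ball.add_left h0U
  simp only [map_zero] at hg
  have hgU : ∀ k ∈ K, ∀ b ∈ ball (0 : E) (M + ε), g x₀ + g k + g b < 0 := fun k hk b hb => by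
    simpa using hg _ (hU k hk b hb)
  have hgK : K ≤ LinearMap.ker (g : E →ₗ[ℝ] ℝ) := fun k hk =>
    eq_zero_of_forall_add_mul_neg fun t => by
      simpa using hgU (t • k) (K.smul_mem t hk) 0 (mem_ball_self (by linarith))
  obtain ⟨a, ha⟩ := (Submodule.mem_span_range_iff_exists_fun ℝ).1
    (mem_span_of_iInf_ker_le_ker hgK)
  have hga : ∑ i, a i • φ i = g := by
    ext y
    simpa using LinearMap.congr_fun ha y
  have hgx₀ : g x₀ = ∑ i, a i * c i := by
    rw [← hga]
    simp [hx₀]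
  have hball : ∀ b ∈ closedBall (0 : E) (M + ε / 2), g x₀ + g b < 0 := fun b hb => by
    simpa using hgU 0 K.zero_mem b (closedBall_subset_ball (by linarith) hb)
  have hneg : g x₀ < 0 := by simpa using hball 0 (mem_closedBall_self (by linarith))
  have hnorm : ‖g‖ ≤ -g x₀ / (M + ε / 2) := by
    refine ContinuousLinearMap.opNorm_bound_of_ball_bound (by linarith) _ g fun b hb => ?_
    have h₁ := hball b hb
    have h₂ := hball (-b) (by simpa using hb)
    rw [map_neg] at h₂
    rw [Real.norm_eq_abs, abs_le]
    constructor <;> linarith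
  have := H a
  rw [hga, ← hgx₀, abs_of_neg hneg] at this
  have := this.trans (mul_le_mul_of_nonneg_left hnorm hM)
  rw [mul_div_assoc', le_div_iff₀ (by linarith)] at this
  nlinarith

end Helly

lemma abs_mul_infDist_le_norm_smul_add {F : Type*} [NormedAddCommGroup F] [NormedSpace ℝ F]
    (V : Submodule ℝ F) (Φ : F) (t : ℝ) {v : F} (hv : v ∈ V) :
    |t| * infDist Φ V ≤ ‖t • Φ + v‖ := by
  rcases eq_or_ne t 0 with rfl | ht
  · simp
  have hdist : infDist Φ V ≤ ‖Φ + t⁻¹ • v‖ := by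
    simpa [dist_eq_norm] using infDist_le_dist_of_mem (V.smul_mem (-t⁻¹) hv) (x := Φ)
  calc |t| * infDist Φ V ≤ |t| * ‖Φ + t⁻¹ • v‖ := by gcongr
    _ = ‖t • Φ + v‖ := by
      rw [← Real.norm_eq_abs, ← norm_smul, smul_add, smul_inv_smul₀ ht]

namespace NormedSpace

variable {X : Type*} [NormedAddCommGroup X] [NormedSpace ℝ X]

lemma exists_norm_le_forall_apply_eq_bidual (Φ : StrongDual ℝ (StrongDual ℝ X))
    (s : Finset (StrongDual ℝ X)) {ε : ℝ} (hε : 0 < ε) :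
    ∃ y : X, ‖y‖ ≤ ‖Φ‖ + ε ∧ ∀ g ∈ s, g y = Φ g := by
  obtain ⟨y, hy, hys⟩ := exists_norm_le_forall_apply_eq_of_abs_sum_le
    (fun g : s => (g : StrongDual ℝ X)) (fun g => Φ g) (norm_nonneg Φ) hε fun a => by
      simpa [map_sum] using Φ.le_opNorm (∑ g, a g • (g : StrongDual ℝ X))
  exact ⟨y, hy, fun g hg => hys ⟨g, hg⟩⟩

lemma exists_norm_le_one_forall_apply_eq_zero (Φ : StrongDual ℝ (StrongDual ℝ X)) (s : Finset X) :
    ∃ g : StrongDual ℝ X, ‖g‖ ≤ 1 ∧ Φ g = infDist Φ (range (inclusionInDoubleDual ℝ X)) / 2 ∧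
      ∀ y ∈ s, g y = 0 := by
  set J := inclusionInDoubleDual ℝ X
  set d := infDist Φ (range J)
  have key : ∀ (t : ℝ) (w : X), |t| * d ≤ ‖t • Φ + J w‖ := fun t w => by
    have := abs_mul_infDist_le_norm_smul_add
      (LinearMap.range (J : X →ₗ[ℝ] StrongDual ℝ (StrongDual ℝ X))) Φ t ⟨w, rfl⟩
    rwa [LinearMap.coe_range] at this
  obtain ⟨g, hg, hgs⟩ := exists_norm_le_forall_apply_eq_of_abs_sum_le
    (fun o : Option s => o.elim Φ fun y => J y) (fun o => o.elim (d / 2) fun _ => 0)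
    (M := 1 / 2) (by norm_num) one_half_pos fun a => by
      have := key (a none) (∑ y : s, a (some y) • (y : X))
      simp only [Fintype.sum_option, Option.elim, map_sum, map_smul, mul_zero,
        Finset.sum_const_zero, add_zero] at this ⊢
      rw [abs_mul, abs_of_nonneg (div_nonneg infDist_nonneg zero_le_two : 0 ≤ d / 2)]
      linarith
  refine ⟨g, by linarith, hgs none, fun y hy => ?_⟩
  simpa [J] using hgs (some ⟨y, hy⟩)

end NormedSpace

theorem exists_biorthogonal_seq_of_not_reflexive {X : Type*} [NormedAddCommGroup X]
    [NormedSpace ℝ X] [CompleteSpace X] (hX : ¬ ReflexiveSpace X) :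
    ∃ (θ R : ℝ) (f : ℕ → StrongDual ℝ X) (x : ℕ → X), 0 < θ ∧ (∀ k, ‖f k‖ ≤ 1) ∧
      (∀ n, ‖x n‖ ≤ R) ∧ ∀ k n, f k (x n) = if k ≤ n then θ else 0 := by
  obtain ⟨Φ, hΦ⟩ : ∃ Φ, Φ ∉ range (NormedSpace.inclusionInDoubleDual ℝ X) := by
    simpa [ReflexiveSpace, Function.Surjective] using hX
  set J := NormedSpace.inclusionInDoubleDual ℝ X
  have hJ : Isometry J := (NormedSpace.inclusionInDoubleDualLi ℝ (E := X)).isometry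
  have hd : 0 < infDist Φ (range J) :=
    (hJ.isClosedEmbedding.isClosed_range.notMem_iff_infDist_pos ⟨J 0, 0, rfl⟩).1 hΦ
  set θ := infDist Φ (range J) / 2
  let P : StrongDual ℝ X × X → Prop := fun p =>
    ‖p.1‖ ≤ 1 ∧ Φ p.1 = θ ∧ ‖p.2‖ ≤ ‖Φ‖ + 1 ∧ p.1 p.2 = θ
  let r : StrongDual ℝ X × X → StrongDual ℝ X × X → Prop := fun p q =>
    p.1 q.2 = θ ∧ q.1 p.2 = 0
  have step : ∀ s : Finset (StrongDual ℝ X × X), (∀ p ∈ s, P p) → ∃ q, P q ∧ ∀ p ∈ s, r p q := by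
    intro s hs
    classical
    obtain ⟨g, hg, hΦg, hgs⟩ :=
      NormedSpace.exists_norm_le_one_forall_apply_eq_zero Φ (s.image Prod.snd)
    obtain ⟨y, hy, hys⟩ :=
      NormedSpace.exists_norm_le_forall_apply_eq_bidual Φ (insert g (s.image Prod.fst)) one_pos
    refine ⟨(g, y), ⟨hg, hΦg, hy, by rw [hys g (Finset.mem_insert_self _ _), hΦg]⟩,
      fun p hp => ⟨?_, ?_⟩⟩
    · rw [hys p.1 (Finset.mem_insert_of_mem (Finset.mem_image_of_mem _ hp)), (hs p hp).2.1]
    · exact hgs p.2 (Finset.mem_image_of_mem _ hp)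
  obtain ⟨seq, hP, hr⟩ := exists_seq_of_forall_finset_exists P r step
  refine ⟨θ, ‖Φ‖ + 1, fun k => (seq k).1, fun n => (seq n).2, half_pos hd, fun k => (hP k).1,
    fun n => (hP n).2.2.1, fun k n => ?_⟩
  rcases lt_trichotomy k n with hkn | rfl | hnk
  · simpa [hkn.le] using (hr k n hkn).1
  · simpa using (hP k).2.2.2
  · simpa [hnk.not_ge] using (hr n k hnk).2

section ClosedConvexHull

variable {E : Type*} [NormedAddCommGroup E] [NormedSpace ℝ E] {s : Set E} {z : E}

lemma le_apply_of_mem_closure_convexHull (L : StrongDual ℝ E) {c : ℝ} (hs : ∀ p ∈ s, c ≤ L p)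
    (hz : z ∈ closure (convexHull ℝ s)) : c ≤ L z :=
  closure_minimal (convexHull_min hs (convex_halfSpace_ge L.isLinear c))
    (isClosed_le continuous_const L.continuous) hz

lemma tendsto_apply_of_mem_closure_convexHull {f : ℕ → StrongDual ℝ E} {B : ℝ}
    (hf : ∀ k, ‖f k‖ ≤ B) (hs : ∀ p ∈ s, Tendsto (fun k => f k p) atTop (𝓝 0))
    (hz : z ∈ closure (convexHull ℝ s)) : Tendsto (fun k => f k z) atTop (𝓝 0) := by
  have hequi : Equicontinuous ((↑) ∘ f : ℕ → E → ℝ) :=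
    ((NormedSpace.equicontinuous_TFAE f).out 5 1).1 (⟨B, hf⟩ : ∃ C, ∀ k, ‖f k‖ ≤ C)
  have hconv : Convex ℝ {y | Tendsto (fun k => f k y) atTop (𝓝 0)} := by
    intro y hy y' hy' a b _ _ _
    simpa using (hy.const_mul a).add (hy'.const_mul b)
  exact closure_minimal (convexHull_min hs hconv)
    (hequi.isClosed_setOfPred_tendsto continuous_const) hz

end ClosedConvexHull

lemma sInf_range_eq_zero_of_tendsto {u : ℕ → ℝ} (hu : ∀ n, 0 ≤ u n)
    (hlim : Tendsto u atTop (𝓝 0)) : sInf (range u) = 0 :=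
  le_antisymm
    (ge_of_tendsto' hlim fun n => csInf_le ⟨0, forall_mem_range.2 hu⟩ (mem_range_self n))
    (le_csInf (range_nonempty u) (forall_mem_range.2 hu))

namespace NonreflexiveDistance

variable {X : Type*} [NormedAddCommGroup X] [NormedSpace ℝ X]

noncomputable def hullPoint (x : ℕ → X) (a b : ℕ) : X × ℝ :=
  ((1 - 1 / ((a : ℝ) + 1)) • x a + (1 / ((a : ℝ) + 1)) • x b, 1 / ((b : ℝ) + 1))

def hullSet (x : ℕ → X) : Set (X × ℝ) :=
  convexHull ℝ (range fun p : ℕ × ℕ => hullPoint x p.1 p.2)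

variable {x : ℕ → X}

lemma one_div_cast_add_one_le_one (a : ℕ) : 1 / ((a : ℝ) + 1) ≤ 1 :=
  (div_le_one (Nat.cast_add_one_pos a)).2 (by simp)

lemma hullPoint_mem_hullSet (a b : ℕ) : hullPoint x a b ∈ hullSet x :=
  subset_convexHull ℝ _ ⟨(a, b), rfl⟩

lemma norm_hullPoint_le {R : ℝ} (hx : ∀ n, ‖x n‖ ≤ R) (a b : ℕ) :
    ‖hullPoint x a b‖ ≤ max R 1 := by
  have hfst : (hullPoint x a b).1 ∈ closedBall (0 : X) R :=
    convex_closedBall 0 R (mem_closedBall_zero_iff.2 (hx a)) (mem_closedBall_zero_iff.2 (hx b))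
      (sub_nonneg.2 (one_div_cast_add_one_le_one a)) Nat.one_div_pos_of_nat.le (by ring)
  refine max_le_max (mem_closedBall_zero_iff.1 hfst) ?_
  rw [Real.norm_eq_abs, abs_of_pos Nat.one_div_pos_of_nat]
  exact one_div_cast_add_one_le_one b

lemma isBounded_hullSet {R : ℝ} (hx : ∀ n, ‖x n‖ ≤ R) : Bornology.IsBounded (hullSet x) :=
  isBounded_convexHull.2 <| isBounded_iff_forall_norm_le.2
    ⟨max R 1, forall_mem_range.2 fun p => norm_hullPoint_le hx p.1 p.2⟩

lemma dist_hullPoint_fst_le {R : ℝ} (hx : ∀ n, ‖x n‖ ≤ R) (a b b' : ℕ) :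
    dist (hullPoint x a b).1 (hullPoint x a b').1 ≤ 2 * R * (1 / ((a : ℝ) + 1)) := by
  have hw : 0 < 1 / ((a : ℝ) + 1) := Nat.one_div_pos_of_nat
  calc dist (hullPoint x a b).1 (hullPoint x a b').1 = 1 / ((a : ℝ) + 1) * ‖x b - x b'‖ := by
        simp only [hullPoint, dist_eq_norm, add_sub_add_left_eq_sub, ← smul_sub, norm_smul,
          Real.norm_eq_abs, abs_of_pos hw]
    _ ≤ 1 / ((a : ℝ) + 1) * (2 * R) := by
        gcongr
        exact (norm_sub_le _ _).trans (by linarith [hx b, hx b'])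
    _ = 2 * R * (1 / ((a : ℝ) + 1)) := mul_comm _ _

lemma diam_range_hullPoint_fst_le {R : ℝ} (hx : ∀ n, ‖x n‖ ≤ R) (a : ℕ) :
    diam (range fun b => (hullPoint x a b).1) ≤ 2 * R * (1 / ((a : ℝ) + 1)) := by
  have hR : 0 ≤ R := (norm_nonneg _).trans (hx 0)
  exact diam_le_of_forall_dist_le (by positivity) <| forall_mem_range.2 fun b =>
    forall_mem_range.2 fun b' => dist_hullPoint_fst_le hx a b b'

lemma sInf_infDist_hullSet_eq_zero (a : ℕ) :
    sInf ((fun y => infDist ((y, 0) : X × ℝ) (hullSet x)) '' range fun b => (hullPoint x a b).1)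
      = 0 := by
  rw [← range_comp]
  refine sInf_range_eq_zero_of_tendsto (fun b => infDist_nonneg) <|
    squeeze_zero (fun b => infDist_nonneg) (fun b => ?_) tendsto_one_div_add_atTop_nhds_zero_nat
  calc infDist ((hullPoint x a b).1, 0) (hullSet x)
      ≤ dist ((hullPoint x a b).1, 0) (hullPoint x a b) :=
        infDist_le_dist_of_mem (hullPoint_mem_hullSet a b)
    _ = 1 / ((b : ℝ) + 1) := by
        simp [Prod.dist_eq, hullPoint, Real.dist_eq, abs_of_pos, Nat.cast_add_one_pos,
          add_nonneg]

variable {f : ℕ → StrongDual ℝ X} {θ : ℝ} (hfx : ∀ k n, f k (x n) = if k ≤ n then θ else 0)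
include hfx

lemma apply_hullPoint_fst (k a b : ℕ) : f k (hullPoint x a b).1 =
    (1 - 1 / ((a : ℝ) + 1)) * (if k ≤ a then θ else 0) +
      1 / ((a : ℝ) + 1) * (if k ≤ b then θ else 0) := by
  simp [hullPoint, hfx]

lemma tendsto_apply_hullPoint_fst (a b : ℕ) :
    Tendsto (fun k => f k (hullPoint x a b).1) atTop (𝓝 0) := by
  refine tendsto_const_nhds.congr' (eventually_atTop.2 ⟨max a b + 1, fun k hk => ?_⟩)
  show 0 = f k _
  rw [apply_hullPoint_fst hfx, if_neg (by omega), if_neg (by omega)]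
  ring

lemma apply_hullPoint_fst_nonneg (hθ : 0 ≤ θ) (k a b : ℕ) : 0 ≤ f k (hullPoint x a b).1 := by
  have hw : 0 < 1 / ((a : ℝ) + 1) := Nat.one_div_pos_of_nat
  have hw1 := one_div_cast_add_one_le_one a
  rw [apply_hullPoint_fst hfx]
  split_ifs <;> nlinarith

lemma le_apply_hullPoint (hθ : 0 ≤ θ) {k : ℕ} (hk : 2 ≤ k) (K a b : ℕ) :
    θ ≤ 2 * f k (hullPoint x a b).1 + k * f K (hullPoint x a b).1 +
      θ * K * (hullPoint x a b).2 := by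
  have hk0 := apply_hullPoint_fst_nonneg hfx hθ k a b
  have hK0 := apply_hullPoint_fst_nonneg hfx hθ K a b
  have ht0 : 0 ≤ θ * K * (hullPoint x a b).2 :=
    mul_nonneg (by positivity) Nat.one_div_pos_of_nat.le
  have hw : 0 ≤ 1 / ((a : ℝ) + 1) := Nat.one_div_pos_of_nat.le
  have hw1 := one_div_cast_add_one_le_one a
  obtain hka | hak := le_or_gt k a
  · have hw2 : 1 / ((a : ℝ) + 1) ≤ 1 / 2 :=
      one_div_le_one_div_of_le two_pos (by exact_mod_cast hk.trans (hka.trans (Nat.le_succ a)))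
    have : θ ≤ 2 * f k (hullPoint x a b).1 := by
      rw [apply_hullPoint_fst hfx, if_pos hka]
      split_ifs <;> nlinarith
    nlinarith
  obtain hKb | hbK := le_or_gt K b
  · have hkw : 1 ≤ (k : ℝ) * (1 / ((a : ℝ) + 1)) := by
      rw [mul_one_div, le_div_iff₀ (by positivity), one_mul]
      exact_mod_cast hak
    have : θ ≤ k * f K (hullPoint x a b).1 := by
      rw [apply_hullPoint_fst hfx, if_pos hKb]
      have hite : 0 ≤ (1 - 1 / ((a : ℝ) + 1)) * (if K ≤ a then θ else 0) :=
        mul_nonneg (sub_nonneg.2 hw1) (by split_ifs <;> simp [hθ])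
      nlinarith [mul_le_mul_of_nonneg_right hkw hθ]
    linarith
  · have hKt : 1 ≤ (K : ℝ) * (hullPoint x a b).2 := by
      rw [hullPoint, mul_one_div, le_div_iff₀ (by positivity), one_mul]
      exact_mod_cast hbK
    nlinarith

lemma infDist_hullSet_pos (hθ : 0 < θ) (hf : ∀ k, ‖f k‖ ≤ 1) (z : X) :
    0 < infDist ((z, 0) : X × ℝ) (hullSet x) := by
  by_contra! hle
  have hz : ((z, 0) : X × ℝ) ∈ closure (hullSet x) :=
    (mem_closure_iff_infDist_zero ⟨_, hullPoint_mem_hullSet 0 0⟩).2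
      (le_antisymm hle infDist_nonneg)
  have hlim : Tendsto (fun k => f k z) atTop (𝓝 0) := by
    have hfst : ∀ k, ‖(f k).comp (ContinuousLinearMap.fst ℝ X ℝ)‖ ≤ 1 := fun k =>
      ((f k).opNorm_comp_le _).trans
        (mul_le_one₀ (hf k) (norm_nonneg _) (ContinuousLinearMap.norm_fst_le ℝ X ℝ))
    simpa using tendsto_apply_of_mem_closure_convexHull hfst
      (forall_mem_range.2 fun p => tendsto_apply_hullPoint_fst hfx p.1 p.2) hz
  have hbound : ∀ k, 2 ≤ k → ∀ K : ℕ, θ ≤ 2 * f k z + k * f K z := fun k hk K => by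
    simpa using le_apply_of_mem_closure_convexHull
      (((2 : ℝ) • f k + (k : ℝ) • f K).coprod ((θ * K) • ContinuousLinearMap.id ℝ ℝ))
      (forall_mem_range.2 fun p => le_apply_hullPoint hfx hθ.le hk K p.1 p.2) hz
  have hk : ∀ k, 2 ≤ k → θ ≤ 2 * f k z := fun k hk =>
    ge_of_tendsto (by simpa using (hlim.const_mul (k : ℝ)).const_add (2 * f k z))
      (Eventually.of_forall (hbound k hk))
  have : θ ≤ 0 := ge_of_tendsto (by simpa using hlim.const_mul 2) (eventually_atTop.2 ⟨2, hk⟩)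
  linarith

end NonreflexiveDistance

open NonreflexiveDistance

theorem stmt_6 {X : Type*} [NormedAddCommGroup X] [NormedSpace ℝ X] [CompleteSpace X]
    (hX : ¬ ReflexiveSpace X) :
    ∃ C : Set (X × ℝ), C.Nonempty ∧ Bornology.IsBounded C ∧ Convex ℝ C ∧
      (∀ x : X, 0 < Metric.infDist ((x, 0) : X × ℝ) C) ∧
      (∀ ε > (0 : ℝ), ∃ M : Set X, M.Nonempty ∧ Metric.diam M < ε ∧
        sInf ((fun x => Metric.infDist ((x, 0) : X × ℝ) C) '' M) = 0) := by
  obtain ⟨θ, R, f, x, hθ, hf, hx, hfx⟩ := exists_biorthogonal_seq_of_not_reflexive hX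
  refine ⟨hullSet x, ⟨_, hullPoint_mem_hullSet 0 0⟩, isBounded_hullSet hx, convex_convexHull ℝ _,
    infDist_hullSet_pos hfx hθ hf, fun ε hε => ?_⟩
  have hdiam : Tendsto (fun a : ℕ => 2 * R * (1 / ((a : ℝ) + 1))) atTop (𝓝 0) := by
    simpa using tendsto_one_div_add_atTop_nhds_zero_nat.const_mul (2 * R)
  obtain ⟨a, ha⟩ := (hdiam.eventually (gt_mem_nhds hε)).exists
  exact ⟨range fun b => (hullPoint x a b).1, range_nonempty _,
    (diam_range_hullPoint_fst_le hx a).trans_lt ha, sInf_infDist_hullSet_eq_zero a⟩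
end

section
/- With eᵢ, eᵢ* as in James' lemma (unit vectors and functionals with eᵢ*(eⱼ)=0 for i>j, eᵢ*(eⱼ)>1/2 for i≤j), set C := conv{2e_k + (1/k)e∞ : k ∈ ℕ} in X ⊕∞ ℝ. Then inf_{x ∈ X} dist((x,0), C) = 0, and dist((x,0), C̄) > 0 for every x ∈ X (i.e., the closure of C misses X × {0}). -/
/-!
Every point of `C` satisfies two conditions: the closed convex constraints
`1 ≤ e*ᵢ y + i t` for `i ≥ 1` (for a generator, `e*ᵢ(2eₖ) > 1` when `i ≤ k` and `i/k ≥ 1`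
otherwise), and `e*ᵢ y = 0` for all large `i` (a convex but not closed condition). A point
`(x, 0)` of the closure of `C` inherits the first, so `e*ᵢ x ≥ 1` for all `i`; being within
distance `< 1` of some `(y, t) ∈ C`, it also has `e*ᵢ x = e*ᵢ (x - y) < 1` for large `i`.
The infimum is zero because `(2eₖ, 0)` lies at distance `1/k` from a generator.
-/

open Metric Filter Set

section

variable {X : Type*} [NormedAddCommGroup X] [NormedSpace ℝ X]

lemma convex_setOf_eventually_apply_eq_zero (f : ℕ → StrongDual ℝ X) :
    Convex ℝ {y : X | ∀ᶠ i in atTop, f i y = 0} := by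
  intro y hy z hz a b _ _ _
  filter_upwards [hy, hz] with i hyi hzi
  simp [hyi, hzi]

lemma eventually_apply_lt_one_of_mem_closure {f : ℕ → StrongDual ℝ X}
    (hf : ∀ᶠ i in atTop, ‖f i‖ ≤ 1) {x : X}
    (hx : x ∈ closure {y : X | ∀ᶠ i in atTop, f i y = 0}) :
    ∀ᶠ i in atTop, f i x < 1 := by
  obtain ⟨y, hy, hxy⟩ := Metric.mem_closure_iff.mp hx 1 one_pos
  filter_upwards [hf, hy] with i hfi hyi
  calc f i x = f i (x - y) := by rw [map_sub, hyi, sub_zero]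
    _ ≤ ‖f i‖ * ‖x - y‖ := (le_abs_self _).trans ((f i).le_opNorm _)
    _ ≤ 1 * ‖x - y‖ := by gcongr
    _ < 1 := by rwa [one_mul, ← dist_eq_norm]

lemma isClosed_setOf_one_le_apply_add_mul (f : ℕ → StrongDual ℝ X) :
    IsClosed {p : X × ℝ | ∀ i, 1 ≤ i → 1 ≤ f i p.1 + i * p.2} := by
  simp only [ofPred_forall]
  exact isClosed_iInter fun i => isClosed_iInter fun _ =>
    isClosed_le continuous_const (by fun_prop)

lemma convex_setOf_one_le_apply_add_mul (f : ℕ → StrongDual ℝ X) :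
    Convex ℝ {p : X × ℝ | ∀ i, 1 ≤ i → 1 ≤ f i p.1 + i * p.2} := by
  simp only [ofPred_forall]
  exact convex_iInter fun i => convex_iInter fun _ =>
    convex_halfSpace_ge
      (((f i).comp (ContinuousLinearMap.fst ℝ X ℝ) + (i : ℝ) • ContinuousLinearMap.snd ℝ X ℝ).isLinear) 1

end

section James

variable {X : Type*} [NormedAddCommGroup X] [NormedSpace ℝ X]
  {e : ℕ → X} {estar : ℕ → StrongDual ℝ X}

lemma one_le_apply_two_smul_add_mul_one_div
    (h0 : ∀ i j, 1 ≤ j → j < i → estar i (e j) = 0)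
    (h2 : ∀ i j, 1 ≤ i → i ≤ j → (1 : ℝ) / 2 < estar i (e j))
    {i k : ℕ} (hi : 1 ≤ i) (hk : 1 ≤ k) :
    1 ≤ estar i ((2 : ℝ) • e k) + i * (1 / (k : ℝ)) := by
  have hk0 : (0 : ℝ) < k := by exact_mod_cast hk
  rw [map_smul, smul_eq_mul]
  rcases le_or_gt i k with hik | hki
  · linarith [h2 i k hi hik, show (0 : ℝ) ≤ i * (1 / k) by positivity]
  · have : (1 : ℝ) ≤ i * (1 / k) := by
      rw [mul_one_div, le_div_iff₀ hk0, one_mul]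
      exact_mod_cast hki.le
    linarith [h0 i k hk hki]

lemma convexHull_subset_setOf_one_le_inter_eventually_eq_zero
    (h0 : ∀ i j, 1 ≤ j → j < i → estar i (e j) = 0)
    (h2 : ∀ i j, 1 ≤ i → i ≤ j → (1 : ℝ) / 2 < estar i (e j)) :
    convexHull ℝ {p : X × ℝ | ∃ k : ℕ, 1 ≤ k ∧ p = ((2 : ℝ) • e k, 1 / (k : ℝ))} ⊆
      {p : X × ℝ | ∀ i, 1 ≤ i → 1 ≤ estar i p.1 + i * p.2} ∩
        Prod.fst ⁻¹' {y : X | ∀ᶠ i in atTop, estar i y = 0} := by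
  refine convexHull_min ?_ ((convex_setOf_one_le_apply_add_mul estar).inter
    ((convex_setOf_eventually_apply_eq_zero estar).linear_preimage (LinearMap.fst ℝ X ℝ)))
  rintro _ ⟨k, hk, rfl⟩
  refine ⟨fun i hi => one_le_apply_two_smul_add_mul_one_div h0 h2 hi hk, ?_⟩
  filter_upwards [eventually_gt_atTop k] with i hki
  rw [map_smul, h0 i k hk hki, smul_zero]

lemma mk_zero_notMem_closure_convexHull
    (hestar : ∀ i, 1 ≤ i → ‖estar i‖ = 1)
    (h0 : ∀ i j, 1 ≤ j → j < i → estar i (e j) = 0)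
    (h2 : ∀ i j, 1 ≤ i → i ≤ j → (1 : ℝ) / 2 < estar i (e j)) (x : X) :
    ((x, 0) : X × ℝ) ∉ closure
      (convexHull ℝ {p : X × ℝ | ∃ k : ℕ, 1 ≤ k ∧ p = ((2 : ℝ) • e k, 1 / (k : ℝ))}) := by
  intro hx
  have hsub := convexHull_subset_setOf_one_le_inter_eventually_eq_zero h0 h2
  have hbarrier : ∀ i, 1 ≤ i → 1 ≤ estar i x + i * 0 :=
    (isClosed_setOf_one_le_apply_add_mul estar).closure_subset
      (closure_mono (hsub.trans inter_subset_left) hx)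
  have hkernel : x ∈ closure {y : X | ∀ᶠ i in atTop, estar i y = 0} :=
    continuous_fst.closure_preimage_subset _ (closure_mono (hsub.trans inter_subset_right) hx)
  have hnorm : ∀ᶠ i in atTop, ‖estar i‖ ≤ 1 :=
    (eventually_ge_atTop 1).mono fun i hi => (hestar i hi).le
  obtain ⟨i, hlt, hi⟩ :=
    ((eventually_apply_lt_one_of_mem_closure hnorm hkernel).and (eventually_ge_atTop 1)).exists
  linarith [hbarrier i hi]

end James

theorem stmt_7_general {X : Type*} [NormedAddCommGroup X] [NormedSpace ℝ X]
    (e : ℕ → X) (estar : ℕ → StrongDual ℝ X)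
    (hestar : ∀ i, 1 ≤ i → ‖estar i‖ = 1)
    (h0 : ∀ i j, 1 ≤ j → j < i → estar i (e j) = 0)
    (h2 : ∀ i j, 1 ≤ i → i ≤ j → (1 : ℝ) / 2 < estar i (e j))
    (C : Set (X × ℝ))
    (hC : C = convexHull ℝ
      {p : X × ℝ | ∃ k : ℕ, 1 ≤ k ∧ p = ((2 : ℝ) • e k, 1 / (k : ℝ))}) :
    (⨅ x : X, Metric.infDist ((x, 0) : X × ℝ) C) = 0 ∧
    ∀ x : X, 0 < Metric.infDist ((x, 0) : X × ℝ) (closure C) := by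
  have hgen : ∀ k : ℕ, 1 ≤ k → ((2 : ℝ) • e k, 1 / (k : ℝ)) ∈ C := fun k hk =>
    hC ▸ subset_convexHull ℝ _ ⟨k, hk, rfl⟩
  refine ⟨le_antisymm ?_ (Real.iInf_nonneg fun _ => infDist_nonneg), fun x => ?_⟩
  · refine ge_of_tendsto' tendsto_one_div_add_atTop_nhds_zero_nat fun n => ?_
    calc (⨅ x : X, infDist ((x, 0) : X × ℝ) C)
        ≤ infDist (((2 : ℝ) • e (n + 1), 0) : X × ℝ) C :=
          ciInf_le ⟨0, by rintro _ ⟨x, rfl⟩; exact infDist_nonneg⟩ _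
      _ ≤ dist (((2 : ℝ) • e (n + 1), 0) : X × ℝ) ((2 : ℝ) • e (n + 1), 1 / ((n + 1 : ℕ) : ℝ)) :=
          infDist_le_dist_of_mem (hgen (n + 1) n.succ_pos)
      _ = 1 / ((n : ℝ) + 1) := by simp [Prod.dist_eq, abs_of_nonneg, add_nonneg]
  · rw [infDist_closure, ← infDist_pos_iff_notMem_closure ⟨_, hgen 1 le_rfl⟩, hC]
    exact mk_zero_notMem_closure_convexHull hestar h0 h2 x

theorem stmt_7 {X : Type*} [NormedAddCommGroup X] [NormedSpace ℝ X] [CompleteSpace X]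
    (e : ℕ → X) (estar : ℕ → StrongDual ℝ X)
    (he : ∀ i, 1 ≤ i → ‖e i‖ = 1) (hestar : ∀ i, 1 ≤ i → ‖estar i‖ = 1)
    (h0 : ∀ i j, 1 ≤ j → j < i → estar i (e j) = 0)
    (h2 : ∀ i j, 1 ≤ i → i ≤ j → (1 : ℝ) / 2 < estar i (e j))
    (C : Set (X × ℝ))
    (hC : C = convexHull ℝ
      {p : X × ℝ | ∃ k : ℕ, 1 ≤ k ∧ p = ((2 : ℝ) • e k, 1 / (k : ℝ))}) :
    (⨅ x : X, Metric.infDist ((x, 0) : X × ℝ) C) = 0 ∧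
    ∀ x : X, 0 < Metric.infDist ((x, 0) : X × ℝ) (closure C) :=
  stmt_7_general e estar hestar h0 h2 C hC
end

section
/- With the setup above (φ convex 1-Lipschitz positive on X, β > sup φ(B(0,r)), D = {(x, φ(x)−β) : x ∈ B(0,r)}, C = closed convex hull of D ∪ (−D) in X ⊕∞ ℝ), the functional y*(x,t) := t satisfies inf y*(C) = −β, and there is no point z ∈ C with y*(z) = −β. -/
/-!
The functional `(x, t) ↦ t` is bounded below on `C` by `-β` because `C` lies in the (closed,
convex) epigraph of `φ - β` over the ball: the points of `D` lie on its graph, and the points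
`(-x, β - φ x)` of `-D` lie above it since `φ - β < 0` on the ball. As `φ > 0`, no point of that
epigraph reaches height `-β`, while the points of `D` come arbitrarily close to it since
`inf φ = 0` on the ball.
-/

open Set Metric

section GraphHull

variable {E : Type*} [NormedAddCommGroup E] [NormedSpace ℝ E] {s : Set E} {g : E → ℝ}

theorem closure_convexHull_graph_union_neg_subset_epigraph (hs_closed : IsClosed s)
    (hs_neg : ∀ x ∈ s, -x ∈ s) (hg : ConvexOn ℝ s g) (hg_cont : ContinuousOn g s)
    (hg_nonpos : ∀ x ∈ s, g x ≤ 0) :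
    closure (convexHull ℝ ({p : E × ℝ | ∃ x ∈ s, p = (x, g x)} ∪
        -{p : E × ℝ | ∃ x ∈ s, p = (x, g x)})) ⊆
      {p : E × ℝ | p.1 ∈ s ∧ g p.1 ≤ p.2} := by
  have h_graph : {p : E × ℝ | ∃ x ∈ s, p = (x, g x)} ⊆ {p | p.1 ∈ s ∧ g p.1 ≤ p.2} := by
    rintro _ ⟨x, hx, rfl⟩
    exact ⟨hx, le_rfl⟩
  have h_neg_graph :
      -{p : E × ℝ | ∃ x ∈ s, p = (x, g x)} ⊆ {p | p.1 ∈ s ∧ g p.1 ≤ p.2} := by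
    rintro p ⟨x, hx, hp⟩
    obtain rfl : p = (-x, -g x) := by simpa [neg_eq_iff_eq_neg] using hp
    exact ⟨hs_neg x hx, by linarith [hg_nonpos x hx, hg_nonpos (-x) (hs_neg x hx)]⟩
  exact closure_minimal (convexHull_min (union_subset h_graph h_neg_graph) hg.convex_epigraph)
    ((lowerSemicontinuousOn_iff_isClosed_epigraph hs_closed).1 hg_cont.lowerSemicontinuousOn)

end GraphHull

theorem stmt_14_general {X : Type*} [NormedAddCommGroup X] [NormedSpace ℝ X]
    (φ : X → ℝ) (hconv : ConvexOn ℝ Set.univ φ) (hlip : LipschitzWith 1 φ)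
    (hpos : ∀ x, 0 < φ x)
    (r : ℝ) (hr : 0 < r) (hinf : sInf (φ '' Metric.closedBall (0 : X) r) = 0)
    (β : ℝ) (hβ : sSup (φ '' Metric.closedBall (0 : X) r) < β)
    (D : Set (X × ℝ))
    (hD : D = {p : X × ℝ | ∃ x ∈ Metric.closedBall (0 : X) r, p = (x, φ x - β)})
    (C : Set (X × ℝ)) (hC : C = closure (convexHull ℝ (D ∪ -D))) :
    sInf ((fun p : X × ℝ => p.2) '' C) = -β ∧
    ¬ ∃ z ∈ C, (z : X × ℝ).2 = -β := by
  have h_ball : (closedBall (0 : X) r).Nonempty := nonempty_closedBall.2 hr.le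
  have h_lt : ∀ x ∈ closedBall (0 : X) r, φ x < β := fun x hx =>
    (le_csSup (hlip.isBounded_image isBounded_closedBall).bddAbove
      (mem_image_of_mem φ hx)).trans_lt hβ
  have h_C_epi : C ⊆ {p | p.1 ∈ closedBall (0 : X) r ∧ φ p.1 - β ≤ p.2} := by
    subst hD hC
    refine closure_convexHull_graph_union_neg_subset_epigraph isClosed_closedBall
      (fun x hx => by simpa using hx) ?_ (hlip.continuous.sub continuous_const).continuousOn
      fun x hx => by linarith [h_lt x hx]
    exact (hconv.subset (subset_univ _) (convex_closedBall 0 r)).sub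
      (concaveOn_const β (convex_closedBall 0 r))
  have h_D_C : ∀ x ∈ closedBall (0 : X) r, (x, φ x - β) ∈ C := fun x hx => by
    subst hD hC
    exact subset_closure (subset_convexHull ℝ _ (Or.inl ⟨x, hx, rfl⟩))
  have h_above : ∀ p ∈ C, -β < p.2 := fun p hp => by linarith [(h_C_epi hp).2, hpos p.1]
  refine ⟨IsGLB.csInf_eq ⟨?_, fun b hb => ?_⟩ ?_, fun ⟨z, hz, hz_eq⟩ => (h_above z hz).ne' hz_eq⟩
  · rintro _ ⟨p, hp, rfl⟩
    exact (h_above p hp).le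
  · have : b + β ≤ sInf (φ '' closedBall (0 : X) r) := by
      refine le_csInf (h_ball.image φ) ?_
      rintro _ ⟨x, hx, rfl⟩
      linarith [hb ⟨_, h_D_C x hx, rfl⟩]
    linarith
  · obtain ⟨x, hx⟩ := h_ball
    exact ⟨_, _, h_D_C x hx, rfl⟩

theorem stmt_14 {X : Type*} [NormedAddCommGroup X] [NormedSpace ℝ X] [CompleteSpace X]
    (φ : X → ℝ) (hconv : ConvexOn ℝ Set.univ φ) (hlip : LipschitzWith 1 φ)
    (hpos : ∀ x, 0 < φ x)
    (r : ℝ) (hr : 0 < r) (hinf : sInf (φ '' Metric.closedBall (0 : X) r) = 0)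
    (β : ℝ) (hβ : sSup (φ '' Metric.closedBall (0 : X) r) < β)
    (D : Set (X × ℝ))
    (hD : D = {p : X × ℝ | ∃ x ∈ Metric.closedBall (0 : X) r, p = (x, φ x - β)})
    (C : Set (X × ℝ)) (hC : C = closure (convexHull ℝ (D ∪ -D))) :
    sInf ((fun p : X × ℝ => p.2) '' C) = -β ∧
    ¬ ∃ z ∈ C, (z : X × ℝ).2 = -β :=
  stmt_14_general φ hconv hlip hpos r hr hinf β hβ D hD C hC
end
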